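/- arXiv:2405.16405 — 5 statements merged into one kernel-verified Lean document; each statement's English description precedes it below -/
import Mathlib

section
/- Let c ∈ (0,1) be a real number and let k, m be positive natural numbers. If natural numbers a and b satisfy a + b ≤ m, a + b > 0, and (a : ℝ) / (Real.sqrt k * Real.sqrt (a + b)) ≥ c, then (b : ℝ) ≤ m - c * Real.sqrt (m * k); in particular b ≤ ⌊m - c·√(m·k)⌋ (taking the natural-number floor). -/
theorem stmt_0 (c : ℝ) (hc : c ∈ Set.Ioo (0:ℝ) 1) (k m : ℕ) (hk : 0 < k) (hm : 0 < m)
    (a b : ℕ) (hab : a + b ≤ m) (hpos : 0 < a + b)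
    (hcos : (a : ℝ) / (Real.sqrt k * Real.sqrt (a + b)) ≥ c) :
    (b : ℝ) ≤ (m : ℝ) - c * Real.sqrt (m * k) ∧
      b ≤ ⌊(m : ℝ) - c * Real.sqrt (m * k)⌋₊ := by
  obtain ⟨hc0, hc1⟩ := hc
  have hs0 : (0:ℝ) < (a : ℝ) + (b : ℝ) := by exact_mod_cast hpos
  set x : ℝ := Real.sqrt ((a : ℝ) + (b : ℝ)) with hx
  set y : ℝ := Real.sqrt (m : ℝ) with hy
  set t : ℝ := Real.sqrt (k : ℝ) with ht
  have hk0 : (0:ℝ) < (k : ℝ) := by exact_mod_cast hk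
  have ht0 : 0 < t := Real.sqrt_pos.mpr hk0
  have hx0 : 0 < x := Real.sqrt_pos.mpr hs0
  have hx2 : x ^ 2 = (a : ℝ) + (b : ℝ) := Real.sq_sqrt hs0.le
  have hy2 : y ^ 2 = (m : ℝ) := Real.sq_sqrt (by positivity)
  have hxy : x ≤ y := Real.sqrt_le_sqrt (by exact_mod_cast hab)
  have hmk : Real.sqrt ((m : ℝ) * (k : ℝ)) = y * t := by
    exact Real.sqrt_mul (by positivity) _
  have hcos' : c ≤ (a : ℝ) / (t * x) := by
    have h : ((a : ℕ) + (b : ℕ) : ℝ) = (a : ℝ) + (b : ℝ) := by norm_cast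
    simpa [hx, ht, h] using hcos
  have ha : c * (t * x) ≤ (a : ℝ) := (le_div_iff₀ (by positivity)).mp hcos'
  -- x ≥ c * t since a ≤ x^2
  have hax : (a : ℝ) ≤ x ^ 2 := by rw [hx2]; linarith [Nat.cast_nonneg (α := ℝ) b]
  have hctx : c * t ≤ x := by
    have h1 : c * t * x ≤ x * x := by nlinarith
    exact le_of_mul_le_mul_right (by nlinarith) hx0
  have key : (b : ℝ) ≤ (m : ℝ) - c * (y * t) := by nlinarith [mul_nonneg (sub_nonneg.mpr hxy) (by nlinarith : (0:ℝ) ≤ y + x - c * t)]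
  constructor
  · rw [hmk]; exact key
  · exact Nat.le_floor (by rw [hmk]; exact key)
end

section
/- Let c ∈ (0,1) be a real number and let k, m be positive natural numbers with (m : ℝ) ≥ c² * k. Set b₀ = ⌊(m : ℝ) - c * Real.sqrt (m * k)⌋₊ (the natural-number floor, which is well defined and satisfies (b₀ : ℝ) ≤ m) and a₀ = m - b₀. Then a₀ + b₀ = m, a₀ + b₀ > 0, and (a₀ : ℝ) / (Real.sqrt k * Real.sqrt (a₀ + b₀)) ≥ c; that is, the budget ⌊m - c√(mk)⌋ of prohibited words is attainable under the constraints. -/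
theorem stmt_1 (c : ℝ) (hc : c ∈ Set.Ioo (0:ℝ) 1) (k m : ℕ) (hk : 0 < k) (hm : 0 < m)
    (hmk : (m : ℝ) ≥ c ^ 2 * k) :
    let b₀ : ℕ := ⌊(m : ℝ) - c * Real.sqrt (m * k)⌋₊
    let a₀ : ℕ := m - b₀
    a₀ + b₀ = m ∧ 0 < a₀ + b₀ ∧
      (a₀ : ℝ) / (Real.sqrt k * Real.sqrt (a₀ + b₀)) ≥ c := by
  intro b₀ a₀
  obtain ⟨hc0, hc1⟩ := hc
  have hk0 : (0:ℝ) < k := by exact_mod_cast hk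
  have hm0 : (0:ℝ) < m := by exact_mod_cast hm
  -- c * √(mk) ≤ m
  have hsq : c * Real.sqrt ((m:ℝ) * k) ≤ m := by
    have h1 : Real.sqrt ((m:ℝ) * k) = Real.sqrt m * Real.sqrt k := Real.sqrt_mul hm0.le _
    have h2 : c * Real.sqrt k ≤ Real.sqrt m := by
      rw [show Real.sqrt (m:ℝ) = Real.sqrt ((m:ℕ):ℝ) from rfl,
        Real.le_sqrt (mul_nonneg hc0.le (Real.sqrt_nonneg _))]
      · rw [mul_pow, Real.sq_sqrt hk0.le]
        exact hmk
      · exact hm0.le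
    calc c * Real.sqrt ((m:ℝ) * k) = (c * Real.sqrt k) * Real.sqrt m := by rw [h1]; ring
      _ ≤ Real.sqrt m * Real.sqrt m := by
          apply mul_le_mul_of_nonneg_right h2 (Real.sqrt_nonneg _)
      _ = m := Real.mul_self_sqrt hm0.le
  have hnn : (0:ℝ) ≤ (m:ℝ) - c * Real.sqrt ((m:ℝ) * k) := by linarith
  have hb0 : b₀ ≤ m := by
    have := Nat.floor_le hnn
    have h2 : ((b₀:ℕ):ℝ) ≤ (m:ℝ) := by
      refine this.trans ?_
      have : 0 ≤ c * Real.sqrt ((m:ℝ)*k) :=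
        mul_nonneg hc0.le (Real.sqrt_nonneg _)
      linarith
    exact_mod_cast h2
  have hab : a₀ + b₀ = m := Nat.sub_add_cancel hb0
  refine ⟨hab, by omega, ?_⟩
  have ha : (a₀:ℝ) = (m:ℝ) - b₀ := by
    have : (a₀:ℕ) = m - b₀ := rfl
    push_cast [this, hb0]
    ring
  have hfl : (b₀:ℝ) ≤ (m:ℝ) - c * Real.sqrt ((m:ℝ) * k) := Nat.floor_le hnn
  have ha' : (a₀:ℝ) ≥ c * Real.sqrt ((m:ℝ) * k) := by rw [ha]; linarith
  have habm : ((a₀ + b₀ : ℕ):ℝ) = (m:ℝ) := by exact_mod_cast congrArg (Nat.cast (R := ℝ)) hab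
  rw [ge_iff_le, le_div_iff₀ (by
    have h1 : (0:ℝ) < Real.sqrt ((a₀:ℝ) + b₀) := by
      apply Real.sqrt_pos.mpr
      push_cast at habm; rw [habm]; exact hm0
    exact mul_pos (Real.sqrt_pos.mpr hk0) h1)]
  calc c * (Real.sqrt k * Real.sqrt ((a₀:ℝ) + b₀)) = c * Real.sqrt ((m:ℝ) * k) := by
        rw [← Real.sqrt_mul hk0.le]
        push_cast at habm ⊢
        rw [habm, mul_comm (k:ℝ)]
    _ ≤ a₀ := ha'
end

section
/- Let c ∈ (0,1) be a real number and let k, m be positive natural numbers with (m : ℝ) ≥ c² * k. Then ⌊(m : ℝ) - c * Real.sqrt (m * k)⌋₊ is the greatest element of the set {b : ℕ | ∃ a : ℕ, a + b ≤ m ∧ a + b > 0 ∧ (a : ℝ) / (Real.sqrt k * Real.sqrt (a + b)) ≥ c}. -/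
theorem stmt_2 (c : ℝ) (hc : c ∈ Set.Ioo (0:ℝ) 1) (k m : ℕ) (hk : 0 < k) (hm : 0 < m)
    (hmk : (m : ℝ) ≥ c ^ 2 * k) :
    IsGreatest {b : ℕ | ∃ a : ℕ, a + b ≤ m ∧ a + b > 0 ∧
        (a : ℝ) / (Real.sqrt k * Real.sqrt (a + b)) ≥ c}
      ⌊(m : ℝ) - c * Real.sqrt (m * k)⌋₊ := by
  obtain ⟨hc0, hc1⟩ := hc
  have hk0 : (0:ℝ) < k := by exact_mod_cast hk
  have hm0 : (0:ℝ) < m := by exact_mod_cast hm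
  have hsk : Real.sqrt ((m:ℝ) * k) = Real.sqrt m * Real.sqrt k :=
    Real.sqrt_mul (le_of_lt hm0) _
  have hck : c * Real.sqrt k ≤ Real.sqrt m := by
    rw [show (c * Real.sqrt k) = Real.sqrt (c ^ 2 * k) by
      rw [Real.sqrt_mul (by positivity), Real.sqrt_sq hc0.le]]
    exact Real.sqrt_le_sqrt hmk
  have hxm : c * Real.sqrt ((m:ℝ) * k) ≤ m := by
    rw [hsk]
    calc c * (Real.sqrt m * Real.sqrt k) = (c * Real.sqrt k) * Real.sqrt m := by ring
    _ ≤ Real.sqrt m * Real.sqrt m := by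
        apply mul_le_mul_of_nonneg_right hck (Real.sqrt_nonneg _)
    _ = m := Real.mul_self_sqrt hm0.le
  have hx0 : 0 ≤ (m:ℝ) - c * Real.sqrt ((m:ℝ) * k) := by linarith
  set B := ⌊(m : ℝ) - c * Real.sqrt ((m:ℝ) * k)⌋₊ with hB
  have hBx : (B:ℝ) ≤ (m:ℝ) - c * Real.sqrt ((m:ℝ) * k) := Nat.floor_le hx0
  have hBm : B ≤ m := by
    have : (B:ℝ) ≤ (m:ℝ) := by
      have : 0 ≤ c * Real.sqrt ((m:ℝ) * k) := by positivity
      linarith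
    exact_mod_cast this
  constructor
  · refine ⟨m - B, ?_, ?_, ?_⟩
    · rw [Nat.sub_add_cancel hBm]
    · rw [Nat.sub_add_cancel hBm]; exact hm
    · have ha : (((m - B : ℕ)):ℝ) = (m:ℝ) - B := by
        push_cast [Nat.cast_sub hBm]; ring
      have hsum : (((m - B : ℕ)):ℝ) + (B:ℝ) = (m:ℝ) := by rw [ha]; ring
      rw [hsum, ge_iff_le, le_div_iff₀ (by positivity), ha]
      have : c * (Real.sqrt k * Real.sqrt m) = c * Real.sqrt ((m:ℝ)*k) := by
        rw [hsk]; ring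
      rw [this]
      linarith
  · rintro b ⟨a, h1, h2, h3⟩
    apply Nat.le_floor
    have hs0 : (0:ℝ) < ((a:ℝ) + b) := by exact_mod_cast h2
    have hsm : ((a:ℝ) + b) ≤ m := by exact_mod_cast h1
    have hca : c * (Real.sqrt k * Real.sqrt ((a:ℝ) + b)) ≤ a := by
      rw [ge_iff_le, le_div_iff₀ (by positivity)] at h3
      exact h3
    have hss : Real.sqrt ((a:ℝ)+b) ≤ Real.sqrt m := Real.sqrt_le_sqrt hsm
    have hmono : ((a:ℝ)+b) - c * Real.sqrt k * Real.sqrt ((a:ℝ)+b)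
        ≤ (m:ℝ) - c * Real.sqrt ((m:ℝ) * k) := by
      rw [hsk]
      have key : (Real.sqrt m - Real.sqrt ((a:ℝ)+b)) * (c * Real.sqrt k)
          ≤ (Real.sqrt m - Real.sqrt ((a:ℝ)+b)) * (Real.sqrt m + Real.sqrt ((a:ℝ)+b)) := by
        apply mul_le_mul_of_nonneg_left _ (by linarith)
        have := Real.sqrt_nonneg ((a:ℝ)+b)
        linarith
      have hsq1 : Real.sqrt m * Real.sqrt m = (m:ℝ) := Real.mul_self_sqrt hm0.le
      have hsq2 : Real.sqrt ((a:ℝ)+b) * Real.sqrt ((a:ℝ)+b) = (a:ℝ)+b :=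
        Real.mul_self_sqrt hs0.le
      nlinarith [key]
    have hb : (b:ℝ) ≤ ((a:ℝ)+b) - c * Real.sqrt k * Real.sqrt ((a:ℝ)+b) := by
      have := hca
      nlinarith
    linarith
end

section
/- Let c ∈ (0,1) and k, m > 0 be real numbers with m ≥ c² * k. Then m - c * Real.sqrt (m * k) is the supremum (and the maximum, i.e. it is attained) of the set {b : ℝ | ∃ a : ℝ, a ≥ 0 ∧ b ≥ 0 ∧ a + b ≤ m ∧ a ≥ c * Real.sqrt (k * (a + b))}. -/
theorem stmt_3 (c k m : ℝ) (hc : c ∈ Set.Ioo (0:ℝ) 1) (hk : 0 < k) (hm : 0 < m)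
    (hmk : m ≥ c ^ 2 * k) :
    IsGreatest {b : ℝ | ∃ a : ℝ, a ≥ 0 ∧ b ≥ 0 ∧ a + b ≤ m ∧
        a ≥ c * Real.sqrt (k * (a + b))}
      (m - c * Real.sqrt (m * k)) := by
  obtain ⟨hc0, hc1⟩ := hc
  have hsk : Real.sqrt k ^ 2 = k := Real.sq_sqrt hk.le
  have hsm : Real.sqrt m ^ 2 = m := Real.sq_sqrt hm.le
  have hskn : 0 ≤ Real.sqrt k := Real.sqrt_nonneg k
  have hsmn : 0 ≤ Real.sqrt m := Real.sqrt_nonneg m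
  have hmk' : c * Real.sqrt k ≤ Real.sqrt m := by
    nlinarith [sq_nonneg (Real.sqrt m - c * Real.sqrt k), sq_nonneg (Real.sqrt m + c * Real.sqrt k)]
  have hmkeq : Real.sqrt (m * k) = Real.sqrt m * Real.sqrt k := Real.sqrt_mul hm.le k
  have hble : c * Real.sqrt (m * k) ≤ m := by
    rw [hmkeq]
    nlinarith
  constructor
  · refine ⟨c * Real.sqrt (m * k), by positivity, by linarith, by linarith, ?_⟩
    have : c * Real.sqrt (m * k) + (m - c * Real.sqrt (m * k)) = m := by ring
    rw [this, mul_comm k m]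
  · rintro b ⟨a, ha, hb, hab, hcon⟩
    set s := a + b with hs
    have hsnn : (0:ℝ) ≤ s := by linarith
    have hseq : Real.sqrt s ^ 2 = s := Real.sq_sqrt hsnn
    have hksplit : Real.sqrt (k * s) = Real.sqrt k * Real.sqrt s := Real.sqrt_mul hk.le s
    have hssm : Real.sqrt s ≤ Real.sqrt m := Real.sqrt_le_sqrt (by linarith)
    have hssn : 0 ≤ Real.sqrt s := Real.sqrt_nonneg s
    rw [hksplit] at hcon
    rw [hmkeq]
    nlinarith [mul_nonneg (sub_nonneg.2 hssm) (by linarith : (0:ℝ) ≤ Real.sqrt m + Real.sqrt s - c * Real.sqrt k)]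
end

section
/- Let c, k, m be positive real numbers and let b ≥ 0 be a real number. If b ≤ m - c * (c * k + Real.sqrt (k * (4 * b + c² * k))) / 2, then b ≤ m - c * Real.sqrt (m * k). -/
theorem stmt_7 (c k m b : ℝ) (hc : 0 < c) (hk : 0 < k) (hm : 0 < m) (hb : 0 ≤ b)
    (h : b ≤ m - c * (c * k + Real.sqrt (k * (4 * b + c ^ 2 * k))) / 2) :
    b ≤ m - c * Real.sqrt (m * k) := by
  set s := Real.sqrt (k * (4 * b + c ^ 2 * k)) with hs
  set t := Real.sqrt (m * k) with ht
  have hs0 : 0 ≤ s := Real.sqrt_nonneg _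
  have ht0 : 0 ≤ t := Real.sqrt_nonneg _
  have hs2 : s ^ 2 = k * (4 * b + c ^ 2 * k) := by
    rw [hs, Real.sq_sqrt]; positivity
  have ht2 : t ^ 2 = m * k := by
    rw [ht, Real.sq_sqrt]; positivity
  by_contra hcon
  push_neg at hcon
  -- from h: c*k + s < 2*t
  have h1 : c * (c * k + s) / 2 ≤ m - b := by linarith
  have h2 : m - b < c * t := by linarith
  have h3 : c * k + s < 2 * t := by
    have := lt_of_le_of_lt h1 h2
    nlinarith
  nlinarith [sq_nonneg (c * k + s), mul_pos hk hc, sq_nonneg s, mul_pos hm hk]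
end
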